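/- arXiv:1807.09118 — 2 statements merged into one kernel-verified Lean document; each statement's English description precedes it below -/
import Mathlib

section
/- Let L be a Cameron–Liebler line class of PG(3,q) with parameter (q²+1)/2, and let 𝒜 and ℬ be two sets of lines of PG(3,q) of equal size such that: (i) 𝒜 ⊆ L and ℬ ∩ L = ∅; (ii) for every line ℓ with ℓ ∉ 𝒜 ∪ ℬ, |𝒜_ℓ| = |ℬ_ℓ|; (iii) for every line ℓ ∈ 𝒜, |𝒜_ℓ| − |ℬ_ℓ| = q²; (iv) for every line ℓ ∈ ℬ, |ℬ_ℓ| − |𝒜_ℓ| = q². Then the set (L ∖ 𝒜) ∪ ℬ is a Cameron–Liebler line class with parameter (q²+1)/2. -/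
/-!
Common setting: `PG(3,q)` as the lattice of subspaces of `V = GF(q)⁴`;
the pencil of quadrics `Q_λ : x₁x₃ - x₂² + λx₄² = 0`, the plane `π : x₄ = 0`,
the conic `C = Q_λ ∩ π`, and the group `G ≤ PGL(4,q)` induced by the matrices
`M(a,b,c,d)`.
-/

/-- The quadratic form `F_λ(x) = x₁x₃ - x₂² + λx₄²` on `V = F⁴`. -/
def Fq (F : Type) [Field F] (lam : F) (v : Fin 4 → F) : F :=
  v 0 * v 2 - v 1 ^ 2 + lam * v 3 ^ 2

/-- The matrix `M(a,b,c,d)`. -/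
def Mmat (F : Type) [Field F] (a b c d : F) : Matrix (Fin 4) (Fin 4) F :=
  !![a^2, 2*a*c, c^2, 0;
     a*b, a*d + b*c, c*d, 0;
     b^2, 2*b*d, d^2, 0;
     0,   0,       0,   a*d - b*c]

/-- A point of `PG(3,q)`: a 1-dimensional subspace of `F⁴`. -/
def isPoint (F : Type) [Field F] (P : Submodule F (Fin 4 → F)) : Prop :=
  Module.finrank F P = 1

/-- A line of `PG(3,q)`: a 2-dimensional subspace of `F⁴`. -/
def isLine (F : Type) [Field F] (l : Submodule F (Fin 4 → F)) : Prop :=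
  Module.finrank F l = 2

/-- A plane of `PG(3,q)`: a 3-dimensional subspace of `F⁴`. -/
def isPlane (F : Type) [Field F] (s : Submodule F (Fin 4 → F)) : Prop :=
  Module.finrank F s = 3

/-- The quadric `Q_λ`, as the set of points on which `F_λ` vanishes. -/
def quadric (F : Type) [Field F] (lam : F) : Set (Submodule F (Fin 4 → F)) :=
  {P | isPoint F P ∧ ∀ v ∈ P, Fq F lam v = 0}

/-- The plane `π : x₄ = 0`. -/
def planePi (F : Type) [Field F] : Submodule F (Fin 4 → F) where
  carrier := {v | v 3 = 0}
  add_mem' := by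
    intro a b ha hb
    simp only [Set.mem_setOf_eq, Pi.add_apply] at *
    rw [ha, hb, add_zero]
  zero_mem' := by simp
  smul_mem' := by
    intro c a ha
    simp only [Set.mem_setOf_eq, Pi.smul_apply, smul_eq_mul] at *
    rw [ha, mul_zero]

/-- The point `U₄ = ⟨(0,0,0,1)⟩`. -/
def pointU4 (F : Type) [Field F] : Submodule F (Fin 4 → F) :=
  Submodule.span F {(Pi.single 3 1 : Fin 4 → F)}

/-- The conic `C = Q_λ ∩ π` (independent of `λ`). -/
def conicC (F : Type) [Field F] : Set (Submodule F (Fin 4 → F)) :=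
  {P | P ∈ quadric F 0 ∧ P ≤ planePi F}

/-- The set of points of the quadric `Q_λ` lying on a subspace `l`. -/
def qpts (F : Type) [Field F] (lam : F) (l : Submodule F (Fin 4 → F)) :
    Set (Submodule F (Fin 4 → F)) :=
  {P | P ∈ quadric F lam ∧ P ≤ l}

/-- A line is tangent to `Q_λ` if it contains exactly one of its points. -/
def tangentTo (F : Type) [Field F] (l : Submodule F (Fin 4 → F)) (lam : F) : Prop :=
  (qpts F lam l).ncard = 1

/-- A line is secant to `Q_λ` if it contains exactly two of its points. -/
def secantTo (F : Type) [Field F] (l : Submodule F (Fin 4 → F)) (lam : F) : Prop :=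
  (qpts F lam l).ncard = 2

/-- A line is external to `Q_λ` if it contains none of its points. -/
def externalTo (F : Type) [Field F] (l : Submodule F (Fin 4 → F)) (lam : F) : Prop :=
  (qpts F lam l).ncard = 0

/-- `L₁`: lines of `π` tangent to `C`. -/
def lineL1 (F : Type) [Field F] : Set (Submodule F (Fin 4 → F)) :=
  {l | isLine F l ∧ l ≤ planePi F ∧ ({P | P ∈ conicC F ∧ P ≤ l}).ncard = 1}

/-- `L₂`: lines of `π` external to `C`. -/
def lineL2 (F : Type) [Field F] : Set (Submodule F (Fin 4 → F)) :=
  {l | isLine F l ∧ l ≤ planePi F ∧ ({P | P ∈ conicC F ∧ P ≤ l}).ncard = 0}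

/-- `L₃`: lines of `π` secant to `C`. -/
def lineL3 (F : Type) [Field F] : Set (Submodule F (Fin 4 → F)) :=
  {l | isLine F l ∧ l ≤ planePi F ∧ ({P | P ∈ conicC F ∧ P ≤ l}).ncard = 2}

/-- `E`: the external points of `C` in `π` (on exactly two tangent lines of `C`). -/
def setE (F : Type) [Field F] : Set (Submodule F (Fin 4 → F)) :=
  {P | isPoint F P ∧ P ≤ planePi F ∧ P ∉ conicC F ∧
    ({m | m ∈ lineL1 F ∧ P ≤ m}).ncard = 2}

/-- `I`: the internal points of `C` in `π` (on no tangent line of `C`). -/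
def setI (F : Type) [Field F] : Set (Submodule F (Fin 4 → F)) :=
  {P | isPoint F P ∧ P ≤ planePi F ∧ P ∉ conicC F ∧
    ({m | m ∈ lineL1 F ∧ P ≤ m}).ncard = 0}

/-- `L₁'`: the lines through `U₄` contained in the cone `Q₀`. -/
def lineL1' (F : Type) [Field F] : Set (Submodule F (Fin 4 → F)) :=
  {l | isLine F l ∧ pointU4 F ≤ l ∧ ∀ v ∈ l, Fq F 0 v = 0}

/-- `L₂'`: the lines through `U₄` meeting `π` in a point of `I`. -/
def lineL2' (F : Type) [Field F] : Set (Submodule F (Fin 4 → F)) :=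
  {l | isLine F l ∧ pointU4 F ≤ l ∧ (l ⊓ planePi F) ∈ setI F}

/-- `L₃'`: the lines through `U₄` meeting `π` in a point of `E`. -/
def lineL3' (F : Type) [Field F] : Set (Submodule F (Fin 4 → F)) :=
  {l | isLine F l ∧ pointU4 F ≤ l ∧ (l ⊓ planePi F) ∈ setE F}

/-- `L₄`: the lines not through `U₄`, tangent to the cone `Q₀`, meeting `π` in a
point of `E`. -/
def lineL4 (F : Type) [Field F] : Set (Submodule F (Fin 4 → F)) :=
  {l | isLine F l ∧ ¬ pointU4 F ≤ l ∧ tangentTo F l 0 ∧ (l ⊓ planePi F) ∈ setE F}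

/-- `L₄'`: the lines meeting `π` in exactly one point, lying on `C`, and secant to
every quadric `Q_λ`. -/
def lineL4' (F : Type) [Field F] : Set (Submodule F (Fin 4 → F)) :=
  {l | isLine F l ∧ (l ⊓ planePi F) ∈ conicC F ∧ ∀ lam : F, secantTo F l lam}

/-- The collineations of `PG(3,q)` induced by the matrices `M(a,b,c,d)`,
`ad - bc ≠ 0`, acting on subspaces. -/
def Gcoll (F : Type) [Field F] : Set (Equiv.Perm (Submodule F (Fin 4 → F))) :=
  {σ | ∃ a b c d : F, a * d - b * c ≠ 0 ∧
    ∃ e : (Fin 4 → F) ≃ₗ[F] (Fin 4 → F),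
      (∀ v, e v = (Mmat F a b c d).mulVec v) ∧
      ∀ W : Submodule F (Fin 4 → F), σ W = W.map e.toLinearMap}

/-- The group `G ≃ PGL(2,q)`, as a group of collineations of `PG(3,q)`. -/
def G (F : Type) [Field F] : Subgroup (Equiv.Perm (Submodule F (Fin 4 → F))) :=
  Subgroup.closure (Gcoll F)

/-- `A = L₁' ∪ L₂' ∪ L₃ ∪ L₄'`. -/
def setA (F : Type) [Field F] : Set (Submodule F (Fin 4 → F)) :=
  lineL1' F ∪ lineL2' F ∪ lineL3 F ∪ lineL4' F

/-- `B = L₁ ∪ L₂ ∪ L₃' ∪ L₄`. -/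
def setB (F : Type) [Field F] : Set (Submodule F (Fin 4 → F)) :=
  lineL1 F ∪ lineL2 F ∪ lineL3' F ∪ lineL4 F

/-- `S_ℓ`: the lines of `S` meeting the line `ℓ` (in at least a point). -/
def linesMeeting (F : Type) [Field F] (S : Set (Submodule F (Fin 4 → F)))
    (l : Submodule F (Fin 4 → F)) : Set (Submodule F (Fin 4 → F)) :=
  {r | r ∈ S ∧ r ⊓ l ≠ ⊥}

/-- A spread of `PG(3,q)`: `q² + 1` pairwise disjoint lines. -/
def isSpread (F : Type) [Field F] (q : ℕ) (S : Set (Submodule F (Fin 4 → F))) : Prop :=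
  (∀ l ∈ S, isLine F l) ∧ S.ncard = q ^ 2 + 1 ∧
    ∀ l ∈ S, ∀ l' ∈ S, l ≠ l' → l ⊓ l' = ⊥

/-- A Cameron–Liebler line class with parameter `x`: a set of lines meeting every
spread in exactly `x` lines. -/
def isCameronLiebler (F : Type) [Field F] (q x : ℕ)
    (L : Set (Submodule F (Fin 4 → F))) : Prop :=
  (∀ l ∈ L, isLine F l) ∧ ∀ S, isSpread F q S → (L ∩ S).ncard = x

/-- `O_n`: the points off `Q_λ` at which `F_λ` evaluates to a nonsquare. -/
def setOn (F : Type) [Field F] (lam : F) : Set (Submodule F (Fin 4 → F)) :=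
  {P | isPoint F P ∧ ∀ v ∈ P, v ≠ 0 → ¬ IsSquare (Fq F lam v)}

/-- `O_s`: the points off `Q_λ` at which `F_λ` evaluates to a nonzero square. -/
def setOs (F : Type) [Field F] (lam : F) : Set (Submodule F (Fin 4 → F)) :=
  {P | isPoint F P ∧ ∀ v ∈ P, v ≠ 0 → Fq F lam v ≠ 0 ∧ IsSquare (Fq F lam v)}

/-- `T`: the tangent lines to `Q_λ` all of whose points off `Q_λ` lie in `O_n`. -/
def setT (F : Type) [Field F] (lam : F) : Set (Submodule F (Fin 4 → F)) :=
  {l | isLine F l ∧ tangentTo F l lam ∧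
    ∀ P, isPoint F P → P ≤ l → P ∉ quadric F lam → P ∈ setOn F lam}

/-- `S`: the secant lines to `Q_λ`. -/
def setS (F : Type) [Field F] (lam : F) : Set (Submodule F (Fin 4 → F)) :=
  {l | isLine F l ∧ secantTo F l lam}

/-- The symmetric bilinear form obtained by polarizing `F_λ`. -/
def polarFq (F : Type) [Field F] (lam : F) (u v : Fin 4 → F) : F :=
  Fq F lam (u + v) - Fq F lam u - Fq F lam v

theorem polarFq_eq (F : Type) [Field F] (lam : F) (u v : Fin 4 → F) :
    polarFq F lam u v =
      u 0 * v 2 + u 2 * v 0 - 2 * (u 1 * v 1) + lam * (2 * (u 3 * v 3)) := by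
  simp only [polarFq, Fq, Pi.add_apply]
  ring

/-- `W^{⊥_λ}`: the orthogonal complement of a subspace `W` with respect to the
symmetric bilinear form obtained by polarizing `F_λ`. -/
def perpLam (F : Type) [Field F] (lam : F) (W : Submodule F (Fin 4 → F)) :
    Submodule F (Fin 4 → F) where
  carrier := {v | ∀ u ∈ W, polarFq F lam u v = 0}
  add_mem' := by
    intro x y hx hy u hu
    have h1 := hx u hu
    have h2 := hy u hu
    rw [polarFq_eq] at h1 h2 ⊢
    simp only [Pi.add_apply]
    linear_combination h1 + h2
  zero_mem' := by
    intro u hu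
    rw [polarFq_eq]
    simp
  smul_mem' := by
    intro c x hx u hu
    have h1 := hx u hu
    rw [polarFq_eq] at h1 ⊢
    simp only [Pi.smul_apply, smul_eq_mul]
    linear_combination c * h1

/-!
A spread partitions the points of `PG(3,q)`, so a line of a spread `𝒮` meets exactly one line of
`𝒮` (itself) and any other line `m` meets exactly `q + 1` of them, one through each point of `m`.
Double counting incident pairs gives `∑_{ℓ ∈ 𝒮} |𝒳_ℓ| = |𝒳 ∩ 𝒮| + (q + 1) |𝒳 ∖ 𝒮|` for every set
`𝒳` of lines. For `𝒳 = 𝒜, ℬ`, conditions (ii)–(iv) turn the difference of the two sums into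
`q² (|𝒜 ∩ 𝒮| - |ℬ ∩ 𝒮|)`, and with `|𝒜| = |ℬ|` this forces `|𝒜 ∩ 𝒮| = |ℬ ∩ 𝒮|`: replacing `𝒜` by `ℬ`
does not change how many lines of the class lie in `𝒮`.

Points are handled as nonzero vectors: `q² + 1` pairwise disjoint lines contain
`(q² + 1)(q² - 1) = q⁴ - 1` nonzero vectors, i.e. all of them.
-/

open Module Finset

theorem card_filter_inf_ne_bot_of_mem {α : Type*} [Lattice α] [OrderBot α] [DecidableEq α]
    {S : Finset α} (hS : (S : Set α).PairwiseDisjoint id) {r : α} (hr : r ∈ S)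
    (hr0 : r ≠ ⊥) : #{l ∈ S | r ⊓ l ≠ ⊥} = 1 := by
  rw [Finset.card_eq_one]
  refine ⟨r, Finset.eq_singleton_iff_unique_mem.2 ⟨by simp [hr, hr0], fun l hl ↦ ?_⟩⟩
  obtain ⟨hl, hrl⟩ := Finset.mem_filter.1 hl
  by_contra hne
  exact hrl (disjoint_iff.1 (hS hr hl (Ne.symm hne)))

theorem Submodule.finrank_inf_eq_one {F V : Type*} [Field F] [AddCommGroup V] [Module F V]
    [FiniteDimensional F V] {r l : Submodule F V}
    (hr : finrank F r = 2) (hl : finrank F l = 2) (hne : r ≠ l) (hrl : r ⊓ l ≠ ⊥) :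
    finrank F (r ⊓ l : Submodule F V) = 1 := by
  have hpos : finrank F (r ⊓ l : Submodule F V) ≠ 0 := by
    rwa [Ne, Submodule.finrank_eq_zero]
  have hlt : finrank F (r ⊓ l : Submodule F V) < 2 := by
    rw [← hr]
    refine Submodule.finrank_lt_finrank_of_lt (inf_le_left.lt_of_ne fun h ↦ hne ?_)
    exact Submodule.eq_of_le_of_finrank_eq (h ▸ inf_le_right) (hr.trans hl.symm)
  omega

theorem Set.ncard_sdiff_union_inter_eq {α : Type*} {L A B S : Set α} (hS : S.Finite)
    (hAL : A ⊆ L) (hBL : Disjoint B L) (h : (A ∩ S).ncard = (B ∩ S).ncard) :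
    ((L \ A ∪ B) ∩ S).ncard = (L ∩ S).ncard := by
  have hsplit : (L \ A ∪ B) ∩ S = (L ∩ S) \ (A ∩ S) ∪ B ∩ S := by
    ext l
    simp only [Set.mem_inter_iff, Set.mem_union, Set.mem_sdiff]
    tauto
  have hdisj : Disjoint ((L ∩ S) \ (A ∩ S)) (B ∩ S) :=
    (hBL.mono Set.inter_subset_left (Set.sdiff_subset.trans Set.inter_subset_left)).symm
  have hsub : A ∩ S ⊆ L ∩ S := Set.inter_subset_inter_left S hAL
  rw [hsplit, Set.ncard_union_eq hdisj (hS.inter_of_right _).sdiff (hS.inter_of_right _),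
    Set.ncard_sdiff hsub (hS.inter_of_right _), ← h,
    Nat.sub_add_cancel (Set.ncard_le_ncard hsub (hS.inter_of_right _))]

section LineSpread

variable {F V : Type*} [Field F] [AddCommGroup V] [Module F V] [Finite V]

theorem Submodule.ncard_sdiff_zero (W : Submodule F V) :
    ((W : Set V) \ {0}).ncard = Nat.card F ^ finrank F W - 1 := by
  rw [Set.ncard_sdiff_singleton_of_mem W.zero_mem, ← Nat.card_coe_set_eq,
    ← Module.natCard_eq_pow_finrank]
  rfl

theorem ncard_biUnion_inf_sdiff_zero {S : Finset (Submodule F V)}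
    (hS : (S : Set (Submodule F V)).PairwiseDisjoint id) (W : Submodule F V) :
    (⋃ l ∈ S, ((W ⊓ l : Submodule F V) : Set V) \ {0}).ncard =
      ∑ l ∈ S, (((W ⊓ l : Submodule F V) : Set V) \ {0}).ncard := by
  rw [← finsum_mem_coe_finset, ← Set.Finite.ncard_biUnion S.finite_toSet
    (fun _ _ ↦ Set.toFinite _)]
  · simp only [Finset.mem_coe]
  · intro l hl l' hl' hne
    refine Set.disjoint_left.2 fun v hv hv' ↦ hv.2 ?_
    exact Submodule.disjoint_def.1 (hS hl hl' hne) v (Submodule.mem_inf.1 hv.1).2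
      (Submodule.mem_inf.1 hv'.1).2

theorem exists_mem_of_pairwiseDisjoint_of_card {S : Finset (Submodule F V)} {k : ℕ}
    (hS : (S : Set (Submodule F V)).PairwiseDisjoint id) (hdim : ∀ l ∈ S, finrank F l = k)
    (hcard : S.card * (Nat.card F ^ k - 1) = Nat.card F ^ finrank F V - 1)
    {v : V} (hv : v ≠ 0) : ∃ l ∈ S, v ∈ l := by
  have hunion : (⋃ l ∈ S, ((⊤ ⊓ l : Submodule F V) : Set V) \ {0}) =
      ((⊤ : Submodule F V) : Set V) \ {0} := by
    refine Set.eq_of_subset_of_ncard_le ?_ ?_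
    · exact Set.iUnion₂_subset fun l _ ↦ Set.sdiff_subset_sdiff_left (by simp)
    · rw [ncard_biUnion_inf_sdiff_zero hS, Submodule.ncard_sdiff_zero, finrank_top,
        Finset.sum_congr rfl fun l hl ↦ by rw [top_inf_eq, Submodule.ncard_sdiff_zero, hdim l hl],
        Finset.sum_const, smul_eq_mul, hcard]
  have : v ∈ ((⊤ : Submodule F V) : Set V) \ {0} := ⟨trivial, hv⟩
  rw [← hunion] at this
  obtain ⟨l, hvl, hl, -⟩ := by simpa using this
  exact ⟨l, hl, hvl⟩

theorem sum_ncard_inf_sdiff_zero {S : Finset (Submodule F V)}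
    (hS : (S : Set (Submodule F V)).PairwiseDisjoint id) (hcover : ∀ v ≠ 0, ∃ l ∈ S, v ∈ l)
    (W : Submodule F V) :
    ∑ l ∈ S, (((W ⊓ l : Submodule F V) : Set V) \ {0}).ncard = ((W : Set V) \ {0}).ncard := by
  rw [← ncard_biUnion_inf_sdiff_zero hS]
  congr 1
  ext v
  simp only [Set.mem_iUnion, Set.mem_sdiff, SetLike.mem_coe, Submodule.mem_inf,
    Set.mem_singleton_iff, exists_prop]
  constructor
  · rintro ⟨l, -, ⟨hv, -⟩, hv0⟩
    exact ⟨hv, hv0⟩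
  · rintro ⟨hv, hv0⟩
    obtain ⟨l, hl, hvl⟩ := hcover v hv0
    exact ⟨l, hl, ⟨hv, hvl⟩, hv0⟩

theorem card_filter_inf_ne_bot_of_notMem [Finite F] {S : Finset (Submodule F V)}
    (hS : (S : Set (Submodule F V)).PairwiseDisjoint id) (hcover : ∀ v ≠ 0, ∃ l ∈ S, v ∈ l)
    (hlines : ∀ l ∈ S, finrank F l = 2) {r : Submodule F V} (hr : finrank F r = 2)
    (hrS : r ∉ S) : #{l ∈ S | r ⊓ l ≠ ⊥} = Nat.card F + 1 := by
  have hq : 1 < Nat.card F := Finite.one_lt_card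
  have hterm : ∀ l ∈ S, (((r ⊓ l : Submodule F V) : Set V) \ {0}).ncard =
      if r ⊓ l ≠ ⊥ then Nat.card F - 1 else 0 := by
    intro l hl
    split_ifs with hrl
    · rw [Submodule.ncard_sdiff_zero,
        Submodule.finrank_inf_eq_one hr (hlines l hl) (ne_of_mem_of_not_mem hl hrS).symm hrl,
        pow_one]
    · rw [not_not.1 hrl, Submodule.ncard_sdiff_zero, finrank_bot, pow_zero, Nat.sub_self]
  have hcount := sum_ncard_inf_sdiff_zero hS hcover r
  rw [Finset.sum_congr rfl hterm, Finset.sum_ite, Finset.sum_const, Finset.sum_const_zero,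
    smul_eq_mul, add_zero, Submodule.ncard_sdiff_zero, hr, ← one_pow 2, Nat.sq_sub_sq]
    at hcount
  exact Nat.eq_of_mul_eq_mul_right (by omega) hcount

theorem sum_ncard_inf_ne_bot [Finite F] {S : Finset (Submodule F V)}
    (hS : (S : Set (Submodule F V)).PairwiseDisjoint id) (hcover : ∀ v ≠ 0, ∃ l ∈ S, v ∈ l)
    (hlines : ∀ l ∈ S, finrank F l = 2) {X : Set (Submodule F V)}
    (hX : ∀ r ∈ X, finrank F r = 2) :
    ∑ l ∈ S, {r ∈ X | r ⊓ l ≠ ⊥}.ncard = (X ∩ S).ncard + (Nat.card F + 1) * (X \ S).ncard := by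
  classical
  obtain ⟨Xf, rfl⟩ := (Set.toFinite X).exists_finset_coe
  have hX0 : ∀ r ∈ Xf, r ≠ ⊥ := by
    rintro r hr rfl
    simpa using hX ⊥ hr
  calc ∑ l ∈ S, {r ∈ (Xf : Set (Submodule F V)) | r ⊓ l ≠ ⊥}.ncard
      = ∑ l ∈ S, #{r ∈ Xf | r ⊓ l ≠ ⊥} :=
        Finset.sum_congr rfl fun l _ ↦ by
          rw [← Set.ncard_coe_finset, Finset.coe_filter]; rfl
    _ = ∑ r ∈ Xf, #{l ∈ S | r ⊓ l ≠ ⊥} :=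
      Finset.sum_card_bipartiteAbove_eq_sum_card_bipartiteBelow (fun l r ↦ r ⊓ l ≠ ⊥)
    _ = ∑ r ∈ Xf, if r ∈ S then 1 else Nat.card F + 1 := by
      refine Finset.sum_congr rfl fun r hr ↦ ?_
      split_ifs with hrS
      · exact card_filter_inf_ne_bot_of_mem hS hrS (hX0 r hr)
      · exact card_filter_inf_ne_bot_of_notMem hS hcover hlines (hX r hr) hrS
    _ = ((Xf : Set (Submodule F V)) ∩ S).ncard +
          (Nat.card F + 1) * ((Xf : Set (Submodule F V)) \ S).ncard := by
      rw [Finset.sum_ite, Finset.sum_const, Finset.sum_const, smul_eq_mul, smul_eq_mul, mul_one,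
        mul_comm, ← Finset.coe_inter, ← Finset.coe_sdiff, Set.ncard_coe_finset,
        Set.ncard_coe_finset, Finset.filter_mem_eq_inter, Finset.filter_notMem_eq_sdiff]

end LineSpread

section Spread

variable {F : Type} [Field F] {q : ℕ}

theorem isSpread.pairwiseDisjoint {S : Set (Submodule F (Fin 4 → F))} (hS : isSpread F q S) :
    S.PairwiseDisjoint id :=
  fun l hl l' hl' hne ↦ disjoint_iff.2 (hS.2.2 l hl l' hl' hne)

theorem isSpread.exists_mem [Fintype F] (hq : Fintype.card F = q)
    {S : Finset (Submodule F (Fin 4 → F))} (hS : isSpread F q S) {v : Fin 4 → F} (hv : v ≠ 0) :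
    ∃ l ∈ S, v ∈ l := by
  refine exists_mem_of_pairwiseDisjoint_of_card hS.pairwiseDisjoint hS.1 ?_ hv
  rw [← Set.ncard_coe_finset, hS.2.1, Nat.card_eq_fintype_card, hq, finrank_fin_fun,
    show q ^ 4 - 1 = (q ^ 2) ^ 2 - 1 ^ 2 by ring_nf, Nat.sq_sub_sq]

theorem isSpread.sum_ncard_linesMeeting [Fintype F] (hq : Fintype.card F = q)
    {S : Finset (Submodule F (Fin 4 → F))} (hS : isSpread F q S)
    {X : Set (Submodule F (Fin 4 → F))} (hX : ∀ l ∈ X, isLine F l) :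
    ∑ l ∈ S, (linesMeeting F X l).ncard = (X ∩ S).ncard + (q + 1) * (X \ S).ncard := by
  rw [← hq, ← Nat.card_eq_fintype_card]
  exact sum_ncard_inf_ne_bot hS.pairwiseDisjoint (fun _ ↦ hS.exists_mem hq) hS.1 hX

theorem isSpread.ncard_inter_eq [Fintype F] (hq : Fintype.card F = q)
    {A B : Set (Submodule F (Fin 4 → F))} (hAlines : ∀ l ∈ A, isLine F l)
    (hBlines : ∀ l ∈ B, isLine F l) (hsize : A.ncard = B.ncard) (hAB : Disjoint A B)
    (hii : ∀ l : Submodule F (Fin 4 → F), isLine F l → l ∉ A ∪ B →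
      (linesMeeting F A l).ncard = (linesMeeting F B l).ncard)
    (hiii : ∀ l ∈ A, (linesMeeting F A l).ncard = (linesMeeting F B l).ncard + q ^ 2)
    (hiv : ∀ l ∈ B, (linesMeeting F B l).ncard = (linesMeeting F A l).ncard + q ^ 2)
    {S : Finset (Submodule F (Fin 4 → F))} (hS : isSpread F q S) :
    (A ∩ S).ncard = (B ∩ S).ncard := by
  classical
  have hdiff : ∀ l ∈ S, ((linesMeeting F A l).ncard : ℤ) - (linesMeeting F B l).ncard =
      q ^ 2 * ((if l ∈ A then 1 else 0) - (if l ∈ B then 1 else 0)) := by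
    intro l hl
    by_cases hlA : l ∈ A
    · simp [hlA, hAB.notMem_of_mem_left hlA, hiii l hlA]
    by_cases hlB : l ∈ B
    · simp [hlA, hlB, hiv l hlB]
    · simp [hlA, hlB, hii l (hS.1 l hl) (by simp [hlA, hlB])]
  have hcount (X : Set (Submodule F (Fin 4 → F))) :
      ∑ l ∈ S, (if l ∈ X then 1 else 0 : ℤ) = (X ∩ S).ncard := by
    rw [Finset.sum_boole, ← Set.ncard_coe_finset, Finset.coe_filter, Set.inter_comm]
    rfl
  have hsum := Finset.sum_congr rfl hdiff
  rw [Finset.sum_sub_distrib, ← Finset.mul_sum, Finset.sum_sub_distrib, hcount, hcount] at hsum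
  have hA := congrArg (Nat.cast : ℕ → ℤ) (hS.sum_ncard_linesMeeting hq hAlines)
  have hB := congrArg (Nat.cast : ℕ → ℤ) (hS.sum_ncard_linesMeeting hq hBlines)
  have hsplit := congrArg (Nat.cast : ℕ → ℤ) hsize
  rw [← Set.ncard_inter_add_ncard_sdiff_eq_ncard A S,
    ← Set.ncard_inter_add_ncard_sdiff_eq_ncard B S] at hsplit
  push_cast at hA hB hsplit hsum
  have hq0 : (0 : ℤ) < q ^ 2 + q := by
    have : 0 < q := hq ▸ Fintype.card_pos
    positivity
  have hzero : ((A ∩ S).ncard - (B ∩ S).ncard : ℤ) * (q ^ 2 + q) = 0 := by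
    linear_combination -hsum + hA - hB + (q + 1) * hsplit
  have := (mul_eq_zero.1 hzero).resolve_right hq0.ne'
  omega

end Spread

theorem statement_13_general {F : Type} [Field F] [Fintype F] (q : ℕ)
    (hq : Fintype.card F = q)
    (L A B : Set (Submodule F (Fin 4 → F)))
    (hL : isCameronLiebler F q ((q ^ 2 + 1) / 2) L)
    (hAlines : ∀ l ∈ A, isLine F l) (hBlines : ∀ l ∈ B, isLine F l)
    (hsize : A.ncard = B.ncard)
    (hi : A ⊆ L ∧ B ∩ L = ∅)
    (hii : ∀ l : Submodule F (Fin 4 → F), isLine F l → l ∉ A ∪ B →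
      (linesMeeting F A l).ncard = (linesMeeting F B l).ncard)
    (hiii : ∀ l ∈ A, (linesMeeting F A l).ncard = (linesMeeting F B l).ncard + q ^ 2)
    (hiv : ∀ l ∈ B, (linesMeeting F B l).ncard = (linesMeeting F A l).ncard + q ^ 2) :
    isCameronLiebler F q ((q ^ 2 + 1) / 2) ((L \ A) ∪ B) := by
  obtain ⟨hAL, hBL⟩ := hi
  have hBL : Disjoint B L := Set.disjoint_iff_inter_eq_empty.2 hBL
  have hAB : Disjoint A B := (hBL.mono_right hAL).symm
  refine ⟨fun l hl ↦ hl.elim (fun hl ↦ hL.1 l hl.1) (hBlines l), fun S hS ↦ ?_⟩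
  obtain ⟨T, rfl⟩ := (Set.toFinite S).exists_finset_coe
  rw [Set.ncard_sdiff_union_inter_eq T.finite_toSet hAL hBL
    (hS.ncard_inter_eq hq hAlines hBlines hsize hAB hii hiii hiv)]
  exact hL.2 T hS

theorem statement_13 {F : Type} [Field F] [Fintype F] (q : ℕ)
    (hq : Fintype.card F = q) (hodd : Odd q)
    (L A B : Set (Submodule F (Fin 4 → F)))
    (hL : isCameronLiebler F q ((q ^ 2 + 1) / 2) L)
    (hAlines : ∀ l ∈ A, isLine F l) (hBlines : ∀ l ∈ B, isLine F l)
    (hsize : A.ncard = B.ncard)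
    (hi : A ⊆ L ∧ B ∩ L = ∅)
    (hii : ∀ l : Submodule F (Fin 4 → F), isLine F l → l ∉ A ∪ B →
      (linesMeeting F A l).ncard = (linesMeeting F B l).ncard)
    (hiii : ∀ l ∈ A, (linesMeeting F A l).ncard = (linesMeeting F B l).ncard + q ^ 2)
    (hiv : ∀ l ∈ B, (linesMeeting F B l).ncard = (linesMeeting F A l).ncard + q ^ 2) :
    isCameronLiebler F q ((q ^ 2 + 1) / 2) ((L \ A) ∪ B) :=
  statement_13_general q hq L A B hL hAlines hBlines hsize hi hii hiii hiv
end

section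
/- Assume q ≡ 1 (mod 4) and let λ̄ ∈ GF(q) be a nonsquare. Then the line set L = T ∪ S satisfies A ⊆ L and B ∩ L = ∅; that is, every line of L₁' ∪ L₂' ∪ L₃ ∪ L₄' is either secant to Q_λ̄ or tangent to Q_λ̄ with all its points off Q_λ̄ in O_n, while no line of L₁ ∪ L₂ ∪ L₃' ∪ L₄ has this property. -/
/-!
On a line spanned by `p, w` with `F_λ(p) ≠ 0`, the points of `Q_λ` are the points `⟨x p + w⟩`
with `x` a root of `F_λ(p) x² + B_λ(p, w) x + F_λ(w)` (`B_λ` the polar form), so there are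
`1 + χ(Δ)` of them, `χ` the quadratic character and `Δ` the discriminant. A point `⟨v⟩` of `π` off
`C` is external or internal according as `-F₀(v)` is a square or not: the tangent lines of `C`
consist of points where `-F₀` is a square. For a line through `U₄` and `⟨v⟩ ∈ π` one finds
`Δ = -4λF₀(v)`; for a line of `L₄` tangency to `Q₀` gives `Δ₀ = 0`, whence `Δ = -4λF₀(v)(w 3)²`.
As `λ` is a nonsquare and `-1` is a square, `χ(Δ)` settles every case.
-/

section Squares

variable {K : Type*} [Field K]

theorem ne_zero_of_not_isSquare {a : K} (ha : ¬IsSquare a) : a ≠ 0 := by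
  rintro rfl
  exact ha IsSquare.zero

theorem not_isSquare_mul_sq {a b : K} (ha : ¬IsSquare a) (hb : b ≠ 0) : ¬IsSquare (a * b ^ 2) :=
  fun ⟨r, hr⟩ => ha ⟨r / b, by field_simp; linear_combination hr⟩

theorem ncard_setOf_quadratic_eq_zero [Fintype K] [DecidableEq K] (hK : ringChar K ≠ 2)
    {a b c : K} (ha : a ≠ 0) :
    ({x | a * (x * x) + b * x + c = 0}.ncard : ℤ) = 1 + quadraticChar K (discrim a b c) := by
  have : NeZero (2 : K) := ⟨Ring.two_ne_zero hK⟩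
  by_cases hd : discrim a b c = 0
  · simp only [quadratic_eq_zero_iff_of_discrim_eq_zero ha hd, Set.ofPred_eq_eq_singleton,
      Set.ncard_singleton, hd, quadraticChar_zero]
    norm_num
  by_cases hsq : IsSquare (discrim a b c)
  · obtain ⟨s, hs⟩ := hsq
    have hs0 : s ≠ 0 := by rintro rfl; simp_all
    have hroots : (-b + s) / (2 * a) ≠ (-b - s) / (2 * a) := by
      intro h
      field_simp at h
      have h2s : (2 : K) * s = 0 := by linear_combination h
      exact hs0 ((mul_eq_zero.mp h2s).resolve_left two_ne_zero)
    simp only [quadratic_eq_zero_iff ha hs, Set.ofPred_or, Set.ofPred_eq_eq_singleton,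
      Set.singleton_union, Set.ncard_pair hroots, (quadraticChar_one_iff_isSquare hd).mpr ⟨s, hs⟩]
    norm_num
  · have hempty : {x | a * (x * x) + b * x + c = 0} = ∅ :=
      Set.eq_empty_of_forall_notMem fun x hx =>
        quadratic_ne_zero_of_discrim_ne_sq (fun s h => hsq ⟨s, by rw [h, sq]⟩) x hx
    rw [hempty, quadraticChar_neg_one_iff_not_isSquare.mpr hsq]
    simp

end Squares

open Submodule

section Geometry

variable {F : Type} [Field F] {lam : F}

theorem Fq_smul (lam c : F) (v : Fin 4 → F) : Fq F lam (c • v) = c ^ 2 * Fq F lam v := by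
  simp only [Fq, Pi.smul_apply, smul_eq_mul]
  ring

theorem Fq_smul_add (lam x : F) (p w : Fin 4 → F) :
    Fq F lam (x • p + w) = Fq F lam p * (x * x) + polarFq F lam p w * x + Fq F lam w := by
  rw [polarFq_eq]
  simp only [Fq, Pi.add_apply, Pi.smul_apply, smul_eq_mul]
  ring

theorem Fq_eq_Fq_zero_add (lam : F) (v : Fin 4 → F) : Fq F lam v = Fq F 0 v + lam * v 3 ^ 2 := by
  simp [Fq]

theorem polarFq_eq_polarFq_zero_add (lam : F) (u v : Fin 4 → F) :
    polarFq F lam u v = polarFq F 0 u v + 2 * lam * (u 3 * v 3) := by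
  rw [polarFq_eq, polarFq_eq]
  ring

theorem mem_planePi_iff {v : Fin 4 → F} : v ∈ planePi F ↔ v 3 = 0 := Iff.rfl

theorem isPoint_span_singleton {v : Fin 4 → F} (hv : v ≠ 0) : isPoint F (span F {v}) :=
  finrank_span_singleton hv

theorem eq_span_singleton_of_isPoint {P : Submodule F (Fin 4 → F)} (hP : isPoint F P)
    {v : Fin 4 → F} (hv : v ∈ P) (hv0 : v ≠ 0) : P = span F {v} :=
  (eq_of_le_of_finrank_eq ((span_singleton_le_iff_mem v P).mpr hv)
    ((finrank_span_singleton hv0).trans hP.symm)).symm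

theorem exists_mem_ne_zero_of_isPoint {P : Submodule F (Fin 4 → F)} (hP : isPoint F P) :
    ∃ v ∈ P, v ≠ 0 :=
  exists_mem_ne_zero_of_ne_bot fun h => by
    rw [isPoint, h, finrank_bot] at hP
    exact zero_ne_one hP

theorem span_singleton_mem_quadric_iff {v : Fin 4 → F} (hv : v ≠ 0) :
    span F {v} ∈ quadric F lam ↔ Fq F lam v = 0 := by
  refine ⟨fun h => h.2 v (mem_span_singleton_self v), fun h => ⟨isPoint_span_singleton hv, ?_⟩⟩
  rintro u hu
  obtain ⟨c, rfl⟩ := mem_span_singleton.mp hu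
  rw [Fq_smul, h, mul_zero]

theorem isLine_span_pair {p w : Fin 4 → F} (hpw : LinearIndependent F ![p, w]) :
    isLine F (span F {p, w}) := by
  have := finrank_span_eq_card hpw
  rwa [Matrix.range_cons, Matrix.range_cons, Matrix.range_empty, Set.union_empty,
    Set.singleton_union] at this

theorem span_pair_eq_of_isLine {l : Submodule F (Fin 4 → F)} (hl : isLine F l)
    {p w : Fin 4 → F} (hp : p ∈ l) (hw : w ∈ l) (hpw : LinearIndependent F ![p, w]) :
    span F {p, w} = l :=
  eq_of_le_of_finrank_eq (span_le.mpr (Set.insert_subset hp (Set.singleton_subset_iff.mpr hw)))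
    ((isLine_span_pair hpw).trans hl.symm)

theorem exists_linearIndependent_pair_of_isLine {l : Submodule F (Fin 4 → F)} (hl : isLine F l)
    {p : Fin 4 → F} (hp0 : p ≠ 0) : ∃ w ∈ l, LinearIndependent F ![p, w] := by
  by_contra! h
  have hle : l ≤ span F {p} := fun w hw => by
    obtain ⟨a, ha⟩ := not_forall.mp (mt (LinearIndependent.pair_iff' hp0).mpr (h w hw))
    exact mem_span_singleton.mpr ⟨a, not_not.mp ha⟩
  have := finrank_mono hle
  rw [hl, finrank_span_singleton hp0] at this
  omega

theorem qpts_span_pair_eq_image {p w : Fin 4 → F} (hpw : LinearIndependent F ![p, w])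
    (hp : Fq F lam p ≠ 0) :
    qpts F lam (span F {p, w}) = (fun x => span F {x • p + w}) ''
      {x | Fq F lam p * (x * x) + polarFq F lam p w * x + Fq F lam w = 0} := by
  have hne : ∀ x : F, x • p + w ≠ 0 := fun x h =>
    one_ne_zero (LinearIndependent.pair_iff.mp hpw x 1 (by rwa [one_smul])).2
  ext P
  constructor
  · rintro ⟨⟨hP, hvan⟩, hPl⟩
    obtain ⟨v, hvP, hv0⟩ := exists_mem_ne_zero_of_isPoint hP
    obtain ⟨s, t, rfl⟩ := mem_span_pair.mp (hPl hvP)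
    have hFv := hvan _ hvP
    have ht : t ≠ 0 := by
      rintro rfl
      have hs : s = 0 := by simpa [Fq_smul, hp] using hFv
      simp [hs] at hv0
    have hv : s • p + t • w = t • ((s / t) • p + w) := by
      rw [smul_add, smul_smul, mul_div_cancel₀ s ht]
    refine ⟨s / t, ?_, ?_⟩
    · rw [Set.mem_ofPred_eq, ← Fq_smul_add]
      rw [hv, Fq_smul] at hFv
      exact (mul_eq_zero.mp hFv).resolve_left (pow_ne_zero 2 ht)
    · rw [eq_span_singleton_of_isPoint hP hvP hv0, hv, span_singleton_smul_eq (IsUnit.mk0 t ht)]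
  · rintro ⟨x, hx, rfl⟩
    refine ⟨(span_singleton_mem_quadric_iff (hne x)).mpr (by rwa [Fq_smul_add]), ?_⟩
    exact (span_singleton_le_iff_mem _ _).mpr (mem_span_pair.mpr ⟨x, 1, by rw [one_smul]⟩)

theorem injective_span_smul_add {p w : Fin 4 → F} (hpw : LinearIndependent F ![p, w]) :
    Function.Injective fun x : F => span F {x • p + w} := by
  intro x y hxy
  have hmem : x • p + w ∈ span F {y • p + w} := by
    simp only at hxy
    rw [← hxy]
    exact mem_span_singleton_self _
  obtain ⟨c, hc⟩ := mem_span_singleton.mp hmem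
  have h := LinearIndependent.pair_iff.mp hpw (c * y - x) (c - 1) (by
    rw [← sub_eq_zero.mpr hc]; module)
  have hc1 : c = 1 := sub_eq_zero.mp h.2
  simpa [hc1, sub_eq_zero, eq_comm] using h.1

theorem ncard_qpts_of_isLine [Fintype F] [DecidableEq F] (hF : ringChar F ≠ 2)
    {l : Submodule F (Fin 4 → F)} (hl : isLine F l) {p w : Fin 4 → F} (hp : p ∈ l) (hw : w ∈ l)
    (hpw : LinearIndependent F ![p, w]) (hFp : Fq F lam p ≠ 0) :
    ((qpts F lam l).ncard : ℤ) =
      1 + quadraticChar F (discrim (Fq F lam p) (polarFq F lam p w) (Fq F lam w)) := by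
  rw [← span_pair_eq_of_isLine hl hp hw hpw, qpts_span_pair_eq_image hpw hFp,
    Set.ncard_image_of_injective _ (injective_span_smul_add hpw)]
  exact ncard_setOf_quadratic_eq_zero hF hFp

end Geometry

section Conic

variable {F : Type} [Field F]

theorem Fq_eq_of_mem_planePi (lam : F) {v : Fin 4 → F} (hv : v ∈ planePi F) :
    Fq F lam v = Fq F 0 v := by
  rw [Fq_eq_Fq_zero_add, mem_planePi_iff.mp hv]
  ring

theorem conic_inter_eq_qpts (lam : F) {l : Submodule F (Fin 4 → F)} (hl : l ≤ planePi F) :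
    {P | P ∈ conicC F ∧ P ≤ l} = qpts F lam l := by
  ext P
  constructor
  · rintro ⟨⟨⟨hP, hvan⟩, -⟩, hPl⟩
    exact ⟨⟨hP, fun v hv => (Fq_eq_of_mem_planePi lam (hl (hPl hv))).trans (hvan v hv)⟩, hPl⟩
  · rintro ⟨⟨hP, hvan⟩, hPl⟩
    refine ⟨⟨⟨hP, fun v hv => ?_⟩, hPl.trans hl⟩, hPl⟩
    exact (Fq_eq_of_mem_planePi lam (hl (hPl hv))).symm.trans (hvan v hv)

theorem Fq_ne_zero_of_notMem_conicC {P : Submodule F (Fin 4 → F)} (hP : isPoint F P)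
    (hPπ : P ≤ planePi F) (hPC : P ∉ conicC F) {v : Fin 4 → F} (hv : v ∈ P) (hv0 : v ≠ 0) :
    Fq F 0 v ≠ 0 := fun h => hPC
  ⟨by rw [eq_span_singleton_of_isPoint hP hv hv0, span_singleton_mem_quadric_iff hv0]; exact h, hPπ⟩

theorem linearIndependent_pair_of_Fq {lam : F} {u w : Fin 4 → F} (hu : Fq F lam u ≠ 0)
    (hw : Fq F lam w = 0) (hw0 : w ≠ 0) : LinearIndependent F ![u, w] := by
  refine (LinearIndependent.pair_iff' fun h => hu (by simp [h, Fq])).mpr fun a ha => hw0 ?_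
  rw [← ha, Fq_smul] at hw
  rw [← ha, (pow_eq_zero_iff two_ne_zero).mp ((mul_eq_zero.mp hw).resolve_right hu), zero_smul]

-- If `p 0 ≠ 0` then `-F₀(v) * p 0 ^ 2 = (p 0 * v 1 - p 1 * v 0) ^ 2`;
-- otherwise `p = (0, 0, p 2, 0)` and `v 0 = 0`.
theorem isSquare_neg_Fq_of_polarFq_eq_zero {p v : Fin 4 → F} (hp : p ∈ planePi F) (hp0 : p ≠ 0)
    (hFp : Fq F 0 p = 0) (hv : v ∈ planePi F) (hvp : polarFq F 0 v p = 0) :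
    IsSquare (-Fq F 0 v) := by
  rw [mem_planePi_iff] at hp hv
  rw [polarFq_eq] at hvp
  simp only [Fq, hp, hv] at hFp ⊢
  by_cases hp0' : p 0 = 0
  · have hp1 : p 1 = 0 :=
      pow_eq_zero_iff two_ne_zero |>.mp (by linear_combination -hFp + p 2 * hp0')
    have hp2 : p 2 ≠ 0 := fun hp2 => hp0 (by ext i; fin_cases i <;> simp [hp0', hp1, hp2, hp])
    have hv0 : v 0 = 0 :=
      (mul_eq_zero.mp (by linear_combination hvp - v 2 * hp0' + 2 * v 1 * hp1 :
        v 0 * p 2 = 0)).resolve_right hp2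
    exact ⟨v 1, by rw [hv0]; ring⟩
  · refine ⟨(p 0 * v 1 - p 1 * v 0) / p 0, ?_⟩
    field_simp
    linear_combination (-(p 0 * v 0)) * hvp + v 0 ^ 2 * hFp

-- `p = (x², xy, y², 0)` lies on `C`, and `polarFq F 0 v p = v 0 * y² - 2 * v 1 * x * y + v 2 * x²`
-- is a binary form in `(x, y)` of discriminant `-4F₀(v) = 4d²`, vanishing at `(v 0, v 1 + d)`.
theorem exists_conic_point_polarFq_eq_zero {v : Fin 4 → F} {d : F} (hd : -Fq F 0 v = d * d) :
    ∃ p ∈ planePi F, p ≠ 0 ∧ Fq F 0 p = 0 ∧ polarFq F 0 v p = 0 := by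
  by_cases hv0 : v 0 = 0
  · refine ⟨![0, 0, 1, 0], rfl, fun h => by simpa using congrFun h 2, ?_, ?_⟩
    · simp [Fq]
    · simp [polarFq_eq, hv0]
  · refine ⟨![v 0 ^ 2, v 0 * (v 1 + d), (v 1 + d) ^ 2, 0], rfl,
      fun h => hv0 (by simpa using congrFun h 0), ?_, ?_⟩
    · simp [Fq]
      ring
    · simp only [Fq] at hd
      simp [polarFq_eq]
      linear_combination (-v 0) * hd

variable [Fintype F]

theorem isSquare_neg_Fq_of_mem_lineL1 (hF : ringChar F ≠ 2) {m : Submodule F (Fin 4 → F)}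
    (hm : m ∈ lineL1 F) {v : Fin 4 → F} (hv : v ∈ m) : IsSquare (-Fq F 0 v) := by
  classical
  obtain ⟨hl, hmπ, h1⟩ := hm
  by_cases hFv : Fq F 0 v = 0
  · exact ⟨0, by simp [hFv]⟩
  rw [conic_inter_eq_qpts 0 hmπ] at h1
  obtain ⟨P, hP⟩ := Set.ncard_eq_one.mp h1
  obtain ⟨⟨hPpt, hvan⟩, hPm⟩ : P ∈ qpts F 0 m := hP ▸ rfl
  obtain ⟨p, hpP, hp0⟩ := exists_mem_ne_zero_of_isPoint hPpt
  have hFp := hvan p hpP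
  have hcount := ncard_qpts_of_isLine hF hl hv (hPm hpP)
    (linearIndependent_pair_of_Fq hFv hFp hp0) hFv
  rw [h1, hFp, discrim, mul_zero, sub_zero] at hcount
  push_cast at hcount
  have hvp : polarFq F 0 v p = 0 :=
    pow_eq_zero_iff two_ne_zero |>.mp (quadraticChar_eq_zero_iff.mp (by linarith))
  exact isSquare_neg_Fq_of_polarFq_eq_zero (hmπ (hPm hpP)) hp0 hFp (hmπ hv) hvp

theorem exists_mem_lineL1_of_isSquare_neg_Fq (hF : ringChar F ≠ 2) {v : Fin 4 → F}
    (hv : v ∈ planePi F) (hFv : Fq F 0 v ≠ 0) (hsq : IsSquare (-Fq F 0 v)) :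
    ∃ m ∈ lineL1 F, v ∈ m := by
  classical
  obtain ⟨d, hd⟩ := hsq
  obtain ⟨p, hp, hp0, hFp, hvp⟩ := exists_conic_point_polarFq_eq_zero hd
  have hind := linearIndependent_pair_of_Fq hFv hFp hp0
  have hmπ : span F {v, p} ≤ planePi F :=
    span_le.mpr (Set.insert_subset hv (Set.singleton_subset_iff.mpr hp))
  have hvm : v ∈ span F {v, p} := subset_span (Set.mem_insert v {p})
  have hcount := ncard_qpts_of_isLine hF (isLine_span_pair hind) hvm
    (subset_span (Set.mem_insert_of_mem v rfl)) hind hFv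
  rw [hvp, hFp, discrim, mul_zero, sub_zero, zero_pow two_ne_zero, quadraticChar_zero] at hcount
  refine ⟨span F {v, p}, ⟨isLine_span_pair hind, hmπ, ?_⟩, hvm⟩
  rw [conic_inter_eq_qpts 0 hmπ]
  exact_mod_cast hcount

theorem Fq_ne_zero_and_isSquare_neg_of_mem_setE (hF : ringChar F ≠ 2)
    {P : Submodule F (Fin 4 → F)} (hP : P ∈ setE F) {v : Fin 4 → F} (hv : v ∈ P) (hv0 : v ≠ 0) :
    Fq F 0 v ≠ 0 ∧ IsSquare (-Fq F 0 v) := by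
  obtain ⟨hPpt, hPπ, hPC, h2⟩ := hP
  obtain ⟨m, hm, hPm⟩ := Set.nonempty_of_ncard_ne_zero (by rw [h2]; norm_num)
  exact ⟨Fq_ne_zero_of_notMem_conicC hPpt hPπ hPC hv hv0,
    isSquare_neg_Fq_of_mem_lineL1 hF hm (hPm hv)⟩

theorem not_isSquare_neg_Fq_of_mem_setI (hF : ringChar F ≠ 2)
    {P : Submodule F (Fin 4 → F)} (hP : P ∈ setI F) {v : Fin 4 → F} (hv : v ∈ P) (hv0 : v ≠ 0) :
    ¬IsSquare (-Fq F 0 v) := by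
  obtain ⟨hPpt, hPπ, hPC, h0⟩ := hP
  intro hsq
  obtain ⟨m, hm, hvm⟩ := exists_mem_lineL1_of_isSquare_neg_Fq hF (hPπ hv)
    (Fq_ne_zero_of_notMem_conicC hPpt hPπ hPC hv hv0) hsq
  rw [Set.ncard_eq_zero] at h0
  refine Set.eq_empty_iff_forall_notMem.mp h0 m ⟨hm, ?_⟩
  rw [eq_span_singleton_of_isPoint hPpt hv hv0]
  exact (span_singleton_le_iff_mem v m).mpr hvm

end Conic

section Lines

variable {F : Type} [Field F] {lam : F}

theorem Fq_single_three (lam : F) : Fq F lam (Pi.single 3 1) = lam := by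
  simp [Fq]

theorem polarFq_single_three (lam : F) (v : Fin 4 → F) :
    polarFq F lam (Pi.single 3 1) v = 2 * lam * v 3 := by
  simp [polarFq_eq]
  ring

theorem single_three_ne_zero : (Pi.single 3 1 : Fin 4 → F) ≠ 0 :=
  fun h => by simpa using congrFun h 3

theorem notMem_setT_union_setS_of_ncard_eq_zero {l : Submodule F (Fin 4 → F)}
    (h : (qpts F lam l).ncard = 0) : l ∉ setT F lam ∪ setS F lam := by
  rintro (⟨-, ht, -⟩ | ⟨-, hs⟩)
  · rw [tangentTo, h] at ht
    omega
  · rw [secantTo, h] at hs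
    omega

theorem exists_Fq_ne_zero_of_tangentTo {l : Submodule F (Fin 4 → F)} (hl : isLine F l)
    (h : tangentTo F l lam) : ∃ v ∈ l, Fq F lam v ≠ 0 := by
  by_contra! hzero
  obtain ⟨p, hp, hp0⟩ := exists_mem_ne_zero_of_ne_bot (p := l) fun hbot => by
    rw [isLine, hbot, finrank_bot] at hl
    omega
  obtain ⟨w, hw, hpw⟩ := exists_linearIndependent_pair_of_isLine hl hp0
  have hmem : ∀ u ∈ l, u ≠ 0 → span F {u} ∈ qpts F lam l := fun u hu hu0 =>
    ⟨(span_singleton_mem_quadric_iff hu0).mpr (hzero u hu), (span_singleton_le_iff_mem u l).mpr hu⟩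
  have hne : span F {p} ≠ span F {w} := fun heq => by
    obtain ⟨a, ha⟩ := mem_span_singleton.mp (heq ▸ mem_span_singleton_self w)
    exact (LinearIndependent.pair_iff' hp0).mp hpw a ha
  have hle := Set.ncard_le_ncard (Set.insert_subset (hmem p hp hp0)
    (Set.singleton_subset_iff.mpr (hmem w hw (LinearIndependent.ne_zero 1 hpw))))
    (Set.finite_of_ncard_ne_zero (by rw [h]; exact one_ne_zero))
  rw [Set.ncard_pair hne, h] at hle
  omega

theorem mem_setS_of_mem_lineL3 (lam : F) {l : Submodule F (Fin 4 → F)} (h : l ∈ lineL3 F) :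
    l ∈ setS F lam :=
  ⟨h.1, by rw [secantTo, ← conic_inter_eq_qpts lam h.2.1]; exact h.2.2⟩

theorem ncard_qpts_of_mem_lineL2 (lam : F) {l : Submodule F (Fin 4 → F)} (h : l ∈ lineL2 F) :
    (qpts F lam l).ncard = 0 := by
  rw [← conic_inter_eq_qpts lam h.2.1]
  exact h.2.2

variable [Fintype F]

theorem ncard_qpts_of_pointU4_le [DecidableEq F] (hF : ringChar F ≠ 2) (hlam : lam ≠ 0)
    {l : Submodule F (Fin 4 → F)} (hl : isLine F l) (hU : pointU4 F ≤ l) {v : Fin 4 → F}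
    (hv : v ∈ l ⊓ planePi F) (hv0 : v ≠ 0) :
    ((qpts F lam l).ncard : ℤ) = 1 + quadraticChar F lam * quadraticChar F (-Fq F 0 v) := by
  have hind : LinearIndependent F ![Pi.single 3 1, v] :=
    (LinearIndependent.pair_iff' single_three_ne_zero).mpr fun a ha => hv0 <| by
      have ha3 : a = 0 := by simpa [mem_planePi_iff.mp hv.2] using congrFun ha 3
      rw [← ha, ha3, zero_smul]
  rw [ncard_qpts_of_isLine hF hl (hU (mem_span_singleton_self _)) hv.1 hind
      (by rwa [Fq_single_three]), Fq_single_three, polarFq_single_three,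
    Fq_eq_of_mem_planePi lam hv.2, mem_planePi_iff.mp hv.2,
    show discrim lam (2 * lam * 0) (Fq F 0 v) = 2 ^ 2 * (lam * -Fq F 0 v) by rw [discrim]; ring,
    map_mul, quadraticChar_sq_one' (Ring.two_ne_zero hF), one_mul, map_mul]

theorem mem_setT_of_mem_lineL1' (hF : ringChar F ≠ 2) (hlam : ¬IsSquare lam)
    {l : Submodule F (Fin 4 → F)} (h : l ∈ lineL1' F) : l ∈ setT F lam := by
  classical
  obtain ⟨hl, hU, hcone⟩ := h
  have hFl : ∀ v ∈ l, Fq F lam v = lam * v 3 ^ 2 := fun v hv => by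
    rw [Fq_eq_Fq_zero_add, hcone v hv, zero_add]
  obtain ⟨w, hw, hind⟩ := exists_linearIndependent_pair_of_isLine hl single_three_ne_zero
  have hcount := ncard_qpts_of_isLine hF hl (hU (mem_span_singleton_self _)) hw hind
    (by rw [Fq_single_three]; exact ne_zero_of_not_isSquare hlam)
  rw [Fq_single_three, polarFq_single_three, hFl w hw,
    show discrim lam (2 * lam * w 3) (lam * w 3 ^ 2) = 0 by rw [discrim]; ring,
    quadraticChar_zero] at hcount
  refine ⟨hl, by rw [tangentTo]; exact_mod_cast hcount, fun P hP hPl hPQ => ⟨hP, ?_⟩⟩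
  intro v hv hv0
  have hv3 : v 3 ≠ 0 := fun h3 => hPQ <| by
    rw [eq_span_singleton_of_isPoint hP hv hv0, span_singleton_mem_quadric_iff hv0,
      hFl v (hPl hv), h3]
    ring
  rw [hFl v (hPl hv)]
  exact not_isSquare_mul_sq hlam hv3

theorem mem_setS_of_mem_lineL2' (hF : ringChar F ≠ 2) (hlam : ¬IsSquare lam)
    {l : Submodule F (Fin 4 → F)} (h : l ∈ lineL2' F) : l ∈ setS F lam := by
  classical
  obtain ⟨hl, hU, hI⟩ := h
  obtain ⟨v, hv, hv0⟩ := exists_mem_ne_zero_of_isPoint hI.1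
  have hcount := ncard_qpts_of_pointU4_le hF (ne_zero_of_not_isSquare hlam) hl hU hv hv0
  rw [quadraticChar_neg_one_iff_not_isSquare.mpr hlam,
    quadraticChar_neg_one_iff_not_isSquare.mpr (not_isSquare_neg_Fq_of_mem_setI hF hI hv hv0)]
    at hcount
  norm_num at hcount
  exact ⟨hl, by rw [secantTo]; exact_mod_cast hcount⟩

theorem ncard_qpts_of_mem_lineL3' (hF : ringChar F ≠ 2) (hlam : ¬IsSquare lam)
    {l : Submodule F (Fin 4 → F)} (h : l ∈ lineL3' F) : (qpts F lam l).ncard = 0 := by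
  classical
  obtain ⟨hl, hU, hE⟩ := h
  obtain ⟨v, hv, hv0⟩ := exists_mem_ne_zero_of_isPoint hE.1
  obtain ⟨hFv, hsq⟩ := Fq_ne_zero_and_isSquare_neg_of_mem_setE hF hE hv hv0
  have hcount := ncard_qpts_of_pointU4_le hF (ne_zero_of_not_isSquare hlam) hl hU hv hv0
  rw [quadraticChar_neg_one_iff_not_isSquare.mpr hlam,
    (quadraticChar_one_iff_isSquare (neg_ne_zero.mpr hFv)).mpr hsq] at hcount
  norm_num at hcount
  exact_mod_cast hcount

theorem ncard_qpts_of_mem_lineL4 (hF : ringChar F ≠ 2) (hlam : ¬IsSquare lam)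
    {l : Submodule F (Fin 4 → F)} (h : l ∈ lineL4 F) : (qpts F lam l).ncard = 0 := by
  classical
  obtain ⟨hl, -, htan, hE⟩ := h
  obtain ⟨v, hv, hv0⟩ := exists_mem_ne_zero_of_isPoint hE.1
  obtain ⟨hFv, hsq⟩ := Fq_ne_zero_and_isSquare_neg_of_mem_setE hF hE hv hv0
  have hv3 := mem_planePi_iff.mp hv.2
  obtain ⟨w, hw, hw3⟩ : ∃ w ∈ l, w 3 ≠ 0 := by
    by_contra! h
    have hE1 := hE.1
    rw [inf_eq_left.mpr fun w hw => mem_planePi_iff.mpr (h w hw), isPoint, hl] at hE1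
    omega
  have hind : LinearIndependent F ![v, w] :=
    (LinearIndependent.pair_iff' hv0).mpr fun a ha => hw3 (by simp [← ha, hv3])
  have hcount₀ := ncard_qpts_of_isLine hF hl hv.1 hw hind hFv
  rw [htan, Nat.cast_one, left_eq_add, quadraticChar_eq_zero_iff] at hcount₀
  have hcount := ncard_qpts_of_isLine hF hl hv.1 hw hind
    (by rwa [Fq_eq_of_mem_planePi lam hv.2])
  rw [Fq_eq_of_mem_planePi lam hv.2, polarFq_eq_polarFq_zero_add, Fq_eq_Fq_zero_add lam w, hv3,
    show discrim (Fq F 0 v) (polarFq F 0 v w + 2 * lam * (0 * w 3)) (Fq F 0 w + lam * w 3 ^ 2)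
      = discrim (Fq F 0 v) (polarFq F 0 v w) (Fq F 0 w) + 2 ^ 2 * (-Fq F 0 v * lam) * w 3 ^ 2 by
        rw [discrim, discrim]; ring,
    hcount₀, zero_add, map_mul, map_mul, map_mul, quadraticChar_sq_one' (Ring.two_ne_zero hF),
    quadraticChar_sq_one' hw3, (quadraticChar_one_iff_isSquare (neg_ne_zero.mpr hFv)).mpr hsq,
    quadraticChar_neg_one_iff_not_isSquare.mpr hlam] at hcount
  norm_num at hcount
  exact_mod_cast hcount

theorem notMem_setT_union_setS_of_mem_lineL1 (hF : ringChar F ≠ 2) (hneg : IsSquare (-1 : F))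
    {l : Submodule F (Fin 4 → F)} (h : l ∈ lineL1 F) : l ∉ setT F lam ∪ setS F lam := by
  obtain ⟨hl, hlπ, h1⟩ := id h
  rw [conic_inter_eq_qpts lam hlπ] at h1
  rintro (⟨-, -, hT⟩ | ⟨-, hS⟩)
  · obtain ⟨v, hv, hFv⟩ := exists_Fq_ne_zero_of_tangentTo hl h1
    have hv0 : v ≠ 0 := fun h0 => hFv (by simp [h0, Fq])
    refine (hT _ (isPoint_span_singleton hv0) ((span_singleton_le_iff_mem v l).mpr hv)
      (by rwa [span_singleton_mem_quadric_iff hv0])).2 v (mem_span_singleton_self v) hv0 ?_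
    rw [Fq_eq_of_mem_planePi lam (hlπ hv), ← neg_neg (Fq F 0 v), neg_eq_neg_one_mul]
    exact hneg.mul (isSquare_neg_Fq_of_mem_lineL1 hF h hv)
  · rw [secantTo, h1] at hS
    omega

end Lines

theorem statement_16 {F : Type} [Field F] [Fintype F] (q : ℕ)
    (hq : Fintype.card F = q) (hq4 : q % 4 = 1)
    (lam : F) (hlam : ¬ IsSquare lam) :
    setA F ⊆ setT F lam ∪ setS F lam ∧
    setB F ∩ (setT F lam ∪ setS F lam) = ∅ := by
  have hF : ringChar F ≠ 2 := by
    rw [Ne, FiniteField.even_card_iff_char_two, hq]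
    omega
  have hneg : IsSquare (-1 : F) := by
    rw [FiniteField.isSquare_neg_one_iff, hq, hq4]
    decide
  refine ⟨?_, Set.eq_empty_of_forall_notMem ?_⟩
  · rintro l (((h | h) | h) | h)
    · exact Or.inl (mem_setT_of_mem_lineL1' hF hlam h)
    · exact Or.inr (mem_setS_of_mem_lineL2' hF hlam h)
    · exact Or.inr (mem_setS_of_mem_lineL3 lam h)
    · exact Or.inr ⟨h.1, h.2.2 lam⟩
  · rintro l ⟨((h | h) | h) | h, hTS⟩
    · exact notMem_setT_union_setS_of_mem_lineL1 hF hneg h hTS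
    · exact notMem_setT_union_setS_of_ncard_eq_zero (ncard_qpts_of_mem_lineL2 lam h) hTS
    · exact notMem_setT_union_setS_of_ncard_eq_zero (ncard_qpts_of_mem_lineL3' hF hlam h) hTS
    · exact notMem_setT_union_setS_of_ncard_eq_zero (ncard_qpts_of_mem_lineL4 hF hlam h) hTS
end
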